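/- For every m ∈ ℕ, every list L of natural numbers sorted in (weakly) descending order with all elements ≤ m lies in the range of lgen_m, where lgen_m 0 = [] and lgen_m (x+1) = next_m (lgen_m x). -/

import Mathlib

def next (m : ℕ) : List ℕ → List ℕ
  | [] => [0]
  | h :: t =>
    if h < m then (h + 1) :: t
    else
      match next m t with
      | [] => []
      | x :: t' => x :: x :: t'

def lgen (m : ℕ) : ℕ → List ℕ
  | 0 => []
  | n + 1 => next m (lgen m n)

/-!
Since `next m` never returns `[]`, a head `h ≥ m` rolls over as
`next m (h :: t) = (next m t).headD 0 :: next m t`. So once the enumeration reaches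
`t.headD 0 :: t`, it raises the head to `m` (if it is smaller) and then arrives at the same shape for `next m t`;
starting from `[0]`, it therefore reaches `t.headD 0 :: t` for every enumerated `t`. A descending
list `h :: t` with `h ≤ m` is then obtained by raising the head of `t.headD 0 :: t` to `h`, which
gives an induction on the list.
-/

theorem next_ne_nil (m : ℕ) : ∀ L : List ℕ, next m L ≠ []
  | [] => by simp [next]
  | h :: t => by
    have ih := next_ne_nil m t
    unfold next
    split_ifs
    · simp
    · split
      · contradiction
      · simp

theorem next_cons_of_lt {m h : ℕ} (t : List ℕ) (hh : h < m) : next m (h :: t) = (h + 1) :: t := by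
  simp [next, hh]

theorem next_cons_of_le {m h : ℕ} (t : List ℕ) (hh : m ≤ h) :
    next m (h :: t) = (next m t).headD 0 :: next m t := by
  have hne := next_ne_nil m t
  simp only [next, if_neg (Nat.not_lt.mpr hh)]
  split
  · contradiction
  · rename_i hx; rw [hx]; rfl

theorem next_mem_range_lgen {m : ℕ} {L : List ℕ} (hL : L ∈ Set.range (lgen m)) :
    next m L ∈ Set.range (lgen m) := by
  obtain ⟨n, rfl⟩ := hL
  exact ⟨n + 1, rfl⟩

theorem cons_mem_range_lgen_of_le {m a b : ℕ} {t : List ℕ} (ht : a :: t ∈ Set.range (lgen m))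
    (hab : a ≤ b) (hbm : b ≤ m) : b :: t ∈ Set.range (lgen m) := by
  induction b, hab using Nat.le_induction with
  | base => exact ht
  | succ b _ ih =>
    rw [← next_cons_of_lt t hbm]
    exact next_mem_range_lgen (ih (Nat.le_of_succ_le hbm))

theorem headD_cons_lgen_mem_range (m n : ℕ) :
    (lgen m n).headD 0 :: lgen m n ∈ Set.range (lgen m) := by
  induction n with
  | zero => exact ⟨1, rfl⟩
  | succ n ih =>
    set t := lgen m n
    obtain ⟨c, hmc, hc⟩ : ∃ c, m ≤ c ∧ c :: t ∈ Set.range (lgen m) := by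
      by_cases ha : t.headD 0 ≤ m
      · exact ⟨m, le_rfl, cons_mem_range_lgen_of_le ih ha le_rfl⟩
      · exact ⟨_, (Nat.not_le.mp ha).le, ih⟩
    rw [lgen, ← next_cons_of_le t hmc]
    exact next_mem_range_lgen hc

theorem stmt_14 (m : ℕ) (L : List ℕ) (hsorted : L.Pairwise (· ≥ ·))
    (hle : ∀ x ∈ L, x ≤ m) : ∃ n : ℕ, lgen m n = L := by
  induction L with
  | nil => exact ⟨0, rfl⟩
  | cons h t ih =>
    rw [List.pairwise_cons] at hsorted
    obtain ⟨n, rfl⟩ := ih hsorted.2 fun x hx => hle x (List.mem_cons_of_mem h hx)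
    have hhead : (lgen m n).headD 0 ≤ h := by
      cases hL : lgen m n with
      | nil => exact Nat.zero_le h
      | cons y _ => exact hsorted.1 y (by simp [hL])
    exact cons_mem_range_lgen_of_le (headD_cons_lgen_mem_range m n) hhead (hle h List.mem_cons_self)
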